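/- Under the ideal cluster assumption (A_{ij} = 0 whenever y_i ≠ y_j), let m and p be distinct indices with p ≤ l (p labeled), y_m = y_p, and A_{mp} = 0, and let ε > 0. Define A' to be equal to A except that A'_{mp} = A'_{pm} = ε. If moreover m > l (m is unlabeled) and m is not correctly predicted under A, then the accuracy strictly increases: Acc(A') > Acc(A). -/

import Mathlib

open Matrix BigOperators Finset

attribute [local instance] Classical.propDecidable

/-- Row sum `d_i = Σ_j A_{ij}` of the affinity matrix. -/
noncomputable def rowSum {n : ℕ} (A : Matrix (Fin n) (Fin n) ℝ) (i : Fin n) : ℝ :=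
  ∑ j, A i j

/-- The normalized matrix `S = D^{-1/2} A D^{-1/2}`. -/
noncomputable def Smat {n : ℕ} (A : Matrix (Fin n) (Fin n) ℝ) : Matrix (Fin n) (Fin n) ℝ :=
  Matrix.diagonal (fun i => (Real.sqrt (rowSum A i))⁻¹) * A *
    Matrix.diagonal (fun i => (Real.sqrt (rowSum A i))⁻¹)

/-- Label matrix `Y` (indices `i` with `(i : ℕ) < l` are the labeled ones). -/
noncomputable def Ymat {n K : ℕ} (l : ℕ) (y : Fin n → Fin K) : Matrix (Fin n) (Fin K) ℝ :=
  fun i c => if (i : ℕ) < l ∧ y i = c then 1 else 0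

/-- `F* = (I - α S)^{-1} Y`. -/
noncomputable def Fstar {n K : ℕ} (l : ℕ) (y : Fin n → Fin K) (α : ℝ)
    (A : Matrix (Fin n) (Fin n) ℝ) : Matrix (Fin n) (Fin K) ℝ :=
  (1 - α • Smat A)⁻¹ * Ymat l y

/-- Instance `i` is correctly predicted: `F*_{i, y_i} > F*_{i, c}` for all `c ≠ y_i`. -/
def CorrectlyPredicted {n K : ℕ} (l : ℕ) (y : Fin n → Fin K) (α : ℝ)
    (A : Matrix (Fin n) (Fin n) ℝ) (i : Fin n) : Prop :=
  ∀ c : Fin K, c ≠ y i → Fstar l y α A i c < Fstar l y α A i (y i)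

/-- Accuracy on the unlabeled instances (those with `(i : ℕ) ≥ l`). -/
noncomputable def AccLP {n K : ℕ} (l : ℕ) (y : Fin n → Fin K) (α : ℝ)
    (A : Matrix (Fin n) (Fin n) ℝ) : ℝ :=
  ((Finset.univ.filter
      (fun i : Fin n => l ≤ (i : ℕ) ∧ CorrectlyPredicted l y α A i)).card : ℝ) /
    ((n : ℝ) - (l : ℝ))

/-- `i` and `j` are connected w.r.t. `B`: a finite sequence of at least one step
with positive affinities joins them. -/
def Connected {n : ℕ} (B : Matrix (Fin n) (Fin n) ℝ) : Fin n → Fin n → Prop :=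
  Relation.TransGen (fun i j => 0 < B i j)

/-! With `P = D⁻¹ A` (nonnegative, row sums `1`) one has `S = D^{1/2} P D^{-1/2}`, so
`(I - α S)⁻¹` is a positive diagonal rescaling of the Neumann series `∑ αᵏ Pᵏ`: its `(i, j)`
entry is nonnegative, and positive exactly when `j` is reachable from `i` along positive
affinities. Under the ideal cluster assumption reachability preserves labels, so `F*_{i c} = 0`
for `c ≠ y_i`, and `i` is correctly predicted iff it reaches a labeled instance of its own class
(when there is another class at all). The new edge `m – p` only enlarges reachability and keeps
the cluster assumption since `y_m = y_p`; so no instance loses its correct prediction, while `m`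
now reaches the labeled `p` and gains one. -/

open Relation

namespace Matrix

variable {ι : Type*} [Fintype ι] [DecidableEq ι]

theorem hasSum_pow_apply_inv_one_sub {M : Matrix ι ι ℝ} (hM : ∀ i, ∑ j, |M i j| < 1)
    (i j : ι) : HasSum (fun k : ℕ => (M ^ k) i j) ((1 - M)⁻¹ i j) := by
  let _ := Matrix.linftyOpNormedRing (n := ι) (α := ℝ)
  let _ := Matrix.linftyOpNormedAlgebra (R := ℝ) (n := ι) (α := ℝ)
  have hnorm : ‖M‖ < 1 := by
    rw [linfty_opNorm_def, ← NNReal.coe_one, NNReal.coe_lt_coe,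
      Finset.sup_lt_iff zero_lt_one]
    intro i _
    rw [← NNReal.coe_lt_coe]
    simpa [Real.norm_eq_abs] using hM i
  have h := hasSum_geom_series_inverse M hnorm
  rw [← nonsing_inv_eq_ringInverse] at h
  exact Pi.hasSum.1 (Pi.hasSum.1 h i) j

section StrictOrderedSemiring

variable {R : Type*} [Semiring R] [LinearOrder R] [IsStrictOrderedRing R] {M : Matrix ι ι R}

theorem pow_succ_apply_pos_iff (hM : ∀ i j, 0 ≤ M i j) {k : ℕ} {i j : ι} :
    0 < (M ^ (k + 1)) i j ↔ ∃ t, 0 < (M ^ k) i t ∧ 0 < M t j := by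
  rw [pow_succ, mul_apply,
    Finset.sum_pos_iff_of_nonneg fun t _ => mul_nonneg (pow_apply_nonneg hM k i t) (hM t j)]
  simp only [Finset.mem_univ, true_and]
  refine exists_congr fun t => ⟨fun h => ?_, fun h => mul_pos h.1 h.2⟩
  exact ⟨pos_of_mul_pos_left h (hM t j), pos_of_mul_pos_right h (pow_apply_nonneg hM k i t)⟩

theorem exists_pow_apply_pos_iff (hM : ∀ i j, 0 ≤ M i j) {i j : ι} :
    (∃ k : ℕ, 0 < (M ^ k) i j) ↔ ReflTransGen (fun a b => 0 < M a b) i j := by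
  constructor
  · rintro ⟨k, hk⟩
    induction k generalizing j with
    | zero =>
      rw [pow_zero, one_apply] at hk
      split_ifs at hk with hij
      · exact hij ▸ ReflTransGen.refl
      · exact absurd hk (lt_irrefl 0)
    | succ k ih =>
      obtain ⟨t, hit, htj⟩ := (pow_succ_apply_pos_iff hM).1 hk
      exact (ih hit).tail htj
  · intro h
    induction h with
    | refl => exact ⟨0, by simp⟩
    | tail _ hbc ih =>
      obtain ⟨k, hk⟩ := ih
      exact ⟨k + 1, (pow_succ_apply_pos_iff hM).2 ⟨_, hk, hbc⟩⟩

end StrictOrderedSemiring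

variable {M : Matrix ι ι ℝ}

theorem hasSum_pow_apply_inv_one_sub_of_nonneg (hM : ∀ i j, 0 ≤ M i j)
    (hrow : ∀ i, ∑ j, M i j < 1) (i j : ι) :
    HasSum (fun k : ℕ => (M ^ k) i j) ((1 - M)⁻¹ i j) :=
  hasSum_pow_apply_inv_one_sub (fun i => by simpa only [abs_of_nonneg (hM i _)] using hrow i) i j

theorem inv_one_sub_apply_nonneg (hM : ∀ i j, 0 ≤ M i j) (hrow : ∀ i, ∑ j, M i j < 1)
    (i j : ι) : 0 ≤ (1 - M)⁻¹ i j :=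
  (hasSum_pow_apply_inv_one_sub_of_nonneg hM hrow i j).nonneg fun k => pow_apply_nonneg hM k i j

theorem inv_one_sub_apply_pos_iff (hM : ∀ i j, 0 ≤ M i j) (hrow : ∀ i, ∑ j, M i j < 1)
    {i j : ι} : 0 < (1 - M)⁻¹ i j ↔ ReflTransGen (fun a b => 0 < M a b) i j := by
  have hs := hasSum_pow_apply_inv_one_sub_of_nonneg hM hrow i j
  rw [← exists_pow_apply_pos_iff hM]
  constructor
  · intro h
    by_contra! hk
    exact (hasSum_le hk hs hasSum_zero).not_gt h
  · rintro ⟨k, hk⟩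
    exact hk.trans_le (le_hasSum hs k fun k' _ => pow_apply_nonneg hM k' i j)

theorem inv_conj_of_mul_eq_one {R : Type*} [CommRing R] {X Y : Matrix ι ι R}
    (hXY : X * Y = 1) (N : Matrix ι ι R) : (X * N * Y)⁻¹ = X * N⁻¹ * Y := by
  rw [mul_inv_rev, mul_inv_rev, inv_eq_left_inv hXY, inv_eq_right_inv hXY, Matrix.mul_assoc]

end Matrix

section LabelPropagation

variable {n : ℕ} {α : ℝ} {A : Matrix (Fin n) (Fin n) ℝ}

-- `D⁻¹ A`, to which `S = D^{-1/2} A D^{-1/2}` is similar via `D^{1/2}`.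
noncomputable def randomWalkMatrix (A : Matrix (Fin n) (Fin n) ℝ) : Matrix (Fin n) (Fin n) ℝ :=
  fun i j => A i j / rowSum A i

theorem sum_randomWalkMatrix (hrow : ∀ i, 0 < rowSum A i) (i : Fin n) :
    ∑ j, randomWalkMatrix A i j = 1 := by
  simp only [randomWalkMatrix, ← Finset.sum_div]
  exact div_self (hrow i).ne'

theorem smul_randomWalkMatrix_nonneg (hα0 : 0 ≤ α) (hA : ∀ i j, 0 ≤ A i j)
    (hrow : ∀ i, 0 < rowSum A i) (i j : Fin n) : 0 ≤ (α • randomWalkMatrix A) i j :=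
  mul_nonneg hα0 (div_nonneg (hA i j) (hrow i).le)

theorem sum_smul_randomWalkMatrix_lt_one (hα1 : α < 1) (hrow : ∀ i, 0 < rowSum A i)
    (i : Fin n) : ∑ j, (α • randomWalkMatrix A) i j < 1 := by
  simpa only [Matrix.smul_apply, smul_eq_mul, ← Finset.mul_sum, sum_randomWalkMatrix hrow,
    mul_one] using hα1

theorem one_sub_smul_Smat (hrow : ∀ i, 0 < rowSum A i) :
    1 - α • Smat A = Matrix.diagonal (fun i => √(rowSum A i)) * (1 - α • randomWalkMatrix A) *
      Matrix.diagonal (fun i => (√(rowSum A i))⁻¹) := by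
  ext i j
  have hi := (Real.sqrt_pos.2 (hrow i)).ne'
  simp only [Smat, randomWalkMatrix, Matrix.mul_diagonal, Matrix.diagonal_mul, Matrix.sub_apply,
    Matrix.smul_apply, smul_eq_mul, Matrix.one_apply]
  have hsq := Real.sq_sqrt (hrow i).le
  have hd := (hrow i).ne'
  split_ifs with hij
  · subst hij
    field_simp
    rw [hsq]
    ring
  · field_simp
    rw [hsq]
    ring

theorem inv_one_sub_smul_Smat_apply (hrow : ∀ i, 0 < rowSum A i) (i j : Fin n) :
    (1 - α • Smat A)⁻¹ i j =
      √(rowSum A i) * (1 - α • randomWalkMatrix A)⁻¹ i j * (√(rowSum A j))⁻¹ := by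
  have hXY : Matrix.diagonal (fun i => √(rowSum A i)) *
      Matrix.diagonal (fun i => (√(rowSum A i))⁻¹) = 1 := by
    rw [Matrix.diagonal_mul_diagonal, ← Matrix.diagonal_one]
    exact congrArg _ (funext fun i => mul_inv_cancel₀ (Real.sqrt_pos.2 (hrow i)).ne')
  rw [one_sub_smul_Smat hrow, Matrix.inv_conj_of_mul_eq_one hXY, Matrix.mul_diagonal,
    Matrix.diagonal_mul]

theorem inv_one_sub_smul_Smat_apply_nonneg (hα0 : 0 ≤ α) (hα1 : α < 1)
    (hA : ∀ i j, 0 ≤ A i j) (hrow : ∀ i, 0 < rowSum A i) (i j : Fin n) :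
    0 ≤ (1 - α • Smat A)⁻¹ i j := by
  rw [inv_one_sub_smul_Smat_apply hrow]
  have := Matrix.inv_one_sub_apply_nonneg (smul_randomWalkMatrix_nonneg hα0 hA hrow)
    (sum_smul_randomWalkMatrix_lt_one hα1 hrow) i j
  positivity

theorem inv_one_sub_smul_Smat_apply_pos_iff (hα0 : 0 < α) (hα1 : α < 1)
    (hA : ∀ i j, 0 ≤ A i j) (hrow : ∀ i, 0 < rowSum A i) {i j : Fin n} :
    0 < (1 - α • Smat A)⁻¹ i j ↔ ReflTransGen (fun a b => 0 < A a b) i j := by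
  have hsupp : (fun a b => 0 < (α • randomWalkMatrix A) a b) = fun a b => 0 < A a b := by
    ext a b
    rw [Matrix.smul_apply, smul_eq_mul, randomWalkMatrix, mul_pos_iff_of_pos_left hα0,
      div_pos_iff_of_pos_right (hrow a)]
  rw [inv_one_sub_smul_Smat_apply hrow, mul_pos_iff_of_pos_right
      (inv_pos.2 (Real.sqrt_pos.2 (hrow j))), mul_pos_iff_of_pos_left (Real.sqrt_pos.2 (hrow i)),
    Matrix.inv_one_sub_apply_pos_iff (smul_randomWalkMatrix_nonneg hα0.le hA hrow)
      (sum_smul_randomWalkMatrix_lt_one hα1 hrow), hsupp]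

variable {K : ℕ} {l : ℕ} {y : Fin n → Fin K}

theorem Fstar_apply_eq_sum (i : Fin n) (c : Fin K) :
    Fstar l y α A i c =
      ∑ j ∈ univ.filter (fun j : Fin n => (j : ℕ) < l ∧ y j = c), (1 - α • Smat A)⁻¹ i j := by
  simp only [Fstar, Ymat, Matrix.mul_apply, mul_ite, mul_one, mul_zero, Finset.sum_filter]

theorem Fstar_apply_nonneg (hα0 : 0 ≤ α) (hα1 : α < 1) (hA : ∀ i j, 0 ≤ A i j)
    (hrow : ∀ i, 0 < rowSum A i) (i : Fin n) (c : Fin K) : 0 ≤ Fstar l y α A i c := by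
  rw [Fstar_apply_eq_sum]
  exact Finset.sum_nonneg fun j _ => inv_one_sub_smul_Smat_apply_nonneg hα0 hα1 hA hrow i j

theorem Fstar_apply_pos_iff (hα0 : 0 < α) (hα1 : α < 1) (hA : ∀ i j, 0 ≤ A i j)
    (hrow : ∀ i, 0 < rowSum A i) {i : Fin n} {c : Fin K} :
    0 < Fstar l y α A i c ↔
      ∃ j : Fin n, (j : ℕ) < l ∧ y j = c ∧ ReflTransGen (fun a b => 0 < A a b) i j := by
  rw [Fstar_apply_eq_sum, Finset.sum_pos_iff_of_nonneg fun j _ =>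
    inv_one_sub_smul_Smat_apply_nonneg hα0.le hα1 hA hrow i j]
  simp only [Finset.mem_filter, Finset.mem_univ, true_and, and_assoc,
    inv_one_sub_smul_Smat_apply_pos_iff hα0 hα1 hA hrow]

theorem label_eq_of_reflTransGen (hcluster : ∀ i j, y i ≠ y j → A i j = 0) {i j : Fin n}
    (hij : ReflTransGen (fun a b => 0 < A a b) i j) : y i = y j := by
  have hstep : ∀ a b, 0 < A a b → y a = y b := fun a b hab => by
    by_contra hne
    exact hab.ne' (hcluster a b hne)
  simpa only [reflTransGen_eq_self] using hij.lift y hstep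

theorem Fstar_apply_eq_zero_of_ne (hcluster : ∀ i j, y i ≠ y j → A i j = 0) (hα0 : 0 < α)
    (hα1 : α < 1) (hA : ∀ i j, 0 ≤ A i j) (hrow : ∀ i, 0 < rowSum A i) {i : Fin n} {c : Fin K} (hc : c ≠ y i) :
    Fstar l y α A i c = 0 := by
  refine (Fstar_apply_nonneg hα0.le hα1 hA hrow i c).antisymm' (not_lt.1 fun hpos => ?_)
  obtain ⟨j, -, rfl, hij⟩ := (Fstar_apply_pos_iff hα0 hα1 hA hrow).1 hpos
  exact hc (label_eq_of_reflTransGen hcluster hij).symm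

theorem correctlyPredicted_iff_of_cluster (hcluster : ∀ i j, y i ≠ y j → A i j = 0)
    (hα0 : 0 < α) (hα1 : α < 1) (hA : ∀ i j, 0 ≤ A i j) (hrow : ∀ i, 0 < rowSum A i)
    {i : Fin n} : CorrectlyPredicted l y α A i ↔ ∀ c, c ≠ y i →
      ∃ j : Fin n, (j : ℕ) < l ∧ y j = y i ∧ ReflTransGen (fun a b => 0 < A a b) i j := by
  refine forall₂_congr fun c hc => ?_
  rw [Fstar_apply_eq_zero_of_ne hcluster hα0 hα1 hA hrow hc, Fstar_apply_pos_iff hα0 hα1 hA hrow]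

theorem rowSum_pos_of_pos_imp_pos {B : Matrix (Fin n) (Fin n) ℝ} (hA : ∀ i j, 0 ≤ A i j)
    (hB : ∀ i j, 0 ≤ B i j) (hAB : ∀ i j, 0 < A i j → 0 < B i j) {i : Fin n}
    (hrow : 0 < rowSum A i) : 0 < rowSum B i := by
  obtain ⟨j, -, hj⟩ := (Finset.sum_pos_iff_of_nonneg fun j _ => hA i j).1 hrow
  exact (Finset.sum_pos_iff_of_nonneg fun j _ => hB i j).2 ⟨j, Finset.mem_univ j, hAB i j hj⟩

theorem AccLP_lt_AccLP_of_mono {A' : Matrix (Fin n) (Fin n) ℝ} (hln : l < n)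
    (hmono : ∀ i : Fin n, l ≤ (i : ℕ) → CorrectlyPredicted l y α A i →
      CorrectlyPredicted l y α A' i)
    {m : Fin n} (hm : l ≤ (m : ℕ)) (hA : ¬ CorrectlyPredicted l y α A m)
    (hA' : CorrectlyPredicted l y α A' m) :
    AccLP l y α A < AccLP l y α A' := by
  have hsub : univ.filter (fun i : Fin n => l ≤ (i : ℕ) ∧ CorrectlyPredicted l y α A i) ⊂
      univ.filter (fun i : Fin n => l ≤ (i : ℕ) ∧ CorrectlyPredicted l y α A' i) := by
    refine (Finset.ssubset_iff_of_subset fun i hi => ?_).2 ⟨m, ?_, ?_⟩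
    · simp only [Finset.mem_filter, Finset.mem_univ, true_and] at hi ⊢
      exact ⟨hi.1, hmono i hi.1 hi.2⟩
    · simp [hm, hA']
    · simp [hA]
  unfold AccLP
  gcongr
  exact sub_pos.2 (Nat.cast_lt.2 hln)

end LabelPropagation

theorem lp_augment_acc_increasing_general
    {n K : ℕ} (l : ℕ) (hln : l < n)
    (y : Fin n → Fin K) (α : ℝ) (hα0 : 0 < α) (hα1 : α < 1)
    (A A' : Matrix (Fin n) (Fin n) ℝ)
    (hnonneg : ∀ i j, 0 ≤ A i j)
    (hrow : ∀ i, 0 < rowSum A i)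
    (hcluster : ∀ i j, y i ≠ y j → A i j = 0)
    (m p : Fin n) (hp : (p : ℕ) < l) (hy : y m = y p)
    (ε : ℝ) (hε : 0 < ε)
    (hA' : ∀ i j, A' i j = if (i = m ∧ j = p) ∨ (i = p ∧ j = m) then ε else A i j)
    (hm : l ≤ (m : ℕ)) (hnotcorrect : ¬ CorrectlyPredicted l y α A m) :
    AccLP l y α A < AccLP l y α A' := by
  have hnonneg' : ∀ i j, 0 ≤ A' i j := fun i j => by
    rw [hA']; split_ifs
    exacts [hε.le, hnonneg i j]
  have hsupp : ∀ i j, 0 < A i j → 0 < A' i j := fun i j hij => by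
    rw [hA']; split_ifs
    exacts [hε, hij]
  have hrow' : ∀ i, 0 < rowSum A' i := fun i =>
    rowSum_pos_of_pos_imp_pos hnonneg hnonneg' hsupp (hrow i)
  have hcluster' : ∀ i j, y i ≠ y j → A' i j = 0 := fun i j hij => by
    rw [hA']; split_ifs with h
    · rcases h with ⟨rfl, rfl⟩ | ⟨rfl, rfl⟩
      exacts [absurd hy hij, absurd hy.symm hij]
    · exact hcluster i j hij
  have hmp : 0 < A' m p := by rw [hA', if_pos (Or.inl ⟨rfl, rfl⟩)]; exact hε
  refine AccLP_lt_AccLP_of_mono hln (fun i _ hi => ?_) hm hnotcorrect ?_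
  · rw [correctlyPredicted_iff_of_cluster hcluster hα0 hα1 hnonneg hrow] at hi
    rw [correctlyPredicted_iff_of_cluster hcluster' hα0 hα1 hnonneg' hrow']
    intro c hc
    obtain ⟨j, hjl, hjy, hij⟩ := hi c hc
    exact ⟨j, hjl, hjy, ReflTransGen.mono hsupp _ _ hij⟩
  · rw [correctlyPredicted_iff_of_cluster hcluster' hα0 hα1 hnonneg' hrow']
    exact fun _ _ => ⟨p, hp, hy.symm, .single hmp⟩

/-- under the ideal cluster assumption, if `m` is unlabeled, not correctly
predicted under `A`, and we enhance the zero-valued affinity between `m` and a labeled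
instance `p` of the same true label to `ε > 0`, then the accuracy strictly increases:
`Acc(A') > Acc(A)`. -/
theorem lp_augment_acc_increasing
    {n K : ℕ} (l : ℕ) (hl : 0 < l) (hln : l < n) (hK : 0 < K)
    (y : Fin n → Fin K) (α : ℝ) (hα0 : 0 < α) (hα1 : α < 1)
    (A A' : Matrix (Fin n) (Fin n) ℝ)
    (hsym : A.IsSymm) (hnonneg : ∀ i j, 0 ≤ A i j) (hdiag : ∀ i, A i i = 0)
    (hrow : ∀ i, 0 < rowSum A i)
    (hcluster : ∀ i j, y i ≠ y j → A i j = 0)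
    (m p : Fin n) (hmp : m ≠ p) (hp : (p : ℕ) < l) (hy : y m = y p)
    (hAmp : A m p = 0) (ε : ℝ) (hε : 0 < ε)
    (hA' : ∀ i j, A' i j = if (i = m ∧ j = p) ∨ (i = p ∧ j = m) then ε else A i j)
    (hm : l ≤ (m : ℕ)) (hnotcorrect : ¬ CorrectlyPredicted l y α A m) :
    AccLP l y α A < AccLP l y α A' :=
  lp_augment_acc_increasing_general l hln y α hα0 hα1 A A' hnonneg hrow hcluster m p hp hy ε hε hA'
    hm hnotcorrect
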